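/- In Hopf coordinates (z1,z2) = (cos s · e^{iφ1}, sin s · e^{iφ2}) on S³, the 1-form α_{p,q} = (p cos² s + q sin² s) cos(φ1+φ2) ds + sin(φ1+φ2) sin s cos s (q dφ1 − p dφ2) satisfies α_{p,q} ∧ dα_{p,q} = −(p+q)(p cos² s + q sin² s) sin s cos s · ds ∧ dφ1 ∧ dφ2; in particular, for p > 0 and q > 0, α_{p,q} is a contact form on the region 0 < s < π/2. -/

import Mathlib

noncomputable section

open Real

/-- Coefficients of the 1-form
`α_{p,q} = F ds + G dφ1 + H dφ2` in Hopf coordinates `(s, φ1, φ2)`: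
`F = (p cos² s + q sin² s) cos(φ1+φ2)`, `G = q sin(φ1+φ2) sin s cos s`,
`H = −p sin(φ1+φ2) sin s cos s`. -/
def Fc (p q : ℝ) (v : ℝ × ℝ × ℝ) : ℝ :=
  (p * cos v.1 ^ 2 + q * sin v.1 ^ 2) * cos (v.2.1 + v.2.2)

def Gc (q : ℝ) (v : ℝ × ℝ × ℝ) : ℝ :=
  sin (v.2.1 + v.2.2) * sin v.1 * cos v.1 * q

def Hc (p : ℝ) (v : ℝ × ℝ × ℝ) : ℝ :=
  -(sin (v.2.1 + v.2.2) * sin v.1 * cos v.1 * p)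

def es : ℝ × ℝ × ℝ := (1, 0, 0)
def eφ1 : ℝ × ℝ × ℝ := (0, 1, 0)
def eφ2 : ℝ × ℝ × ℝ := (0, 0, 1)

/-- The coefficient of `ds ∧ dφ1 ∧ dφ2` in `α_{p,q} ∧ dα_{p,q}` for a 1-form
`α = F ds + G dφ1 + H dφ2`. -/
def contactCoef (p q : ℝ) (v : ℝ × ℝ × ℝ) : ℝ :=
  Fc p q v * (fderiv ℝ (Hc p) v eφ1 - fderiv ℝ (Gc q) v eφ2)
    - Gc q v * (fderiv ℝ (Hc p) v es - fderiv ℝ (Fc p q) v eφ2)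
    + Hc p v * (fderiv ℝ (Gc q) v es - fderiv ℝ (Fc p q) v eφ1)

lemma fderiv_apply_aux (a b : ℝ → ℝ) {a' b' : ℝ} (v u : ℝ × ℝ × ℝ)
    (ha : HasDerivAt a a' v.1) (hb : HasDerivAt b b' (v.2.1 + v.2.2)) :
    fderiv ℝ (fun w : ℝ × ℝ × ℝ => a w.1 * b (w.2.1 + w.2.2)) v u =
      a' * b (v.2.1 + v.2.2) * u.1 + a v.1 * b' * (u.2.1 + u.2.2) := by
  have h1 : HasFDerivAt (fun w : ℝ × ℝ × ℝ => a w.1)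
      (a' • (ContinuousLinearMap.fst ℝ ℝ (ℝ × ℝ))) v :=
    ha.comp_hasFDerivAt v hasFDerivAt_fst
  have h2 : HasFDerivAt (fun w : ℝ × ℝ × ℝ => w.2.1 + w.2.2)
      (((ContinuousLinearMap.fst ℝ ℝ ℝ).comp (ContinuousLinearMap.snd ℝ ℝ (ℝ × ℝ))) +
        ((ContinuousLinearMap.snd ℝ ℝ ℝ).comp (ContinuousLinearMap.snd ℝ ℝ (ℝ × ℝ)))) v :=
    (hasFDerivAt_fst.comp v hasFDerivAt_snd).add (hasFDerivAt_snd.comp v hasFDerivAt_snd)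
  have h3 := hb.comp_hasFDerivAt v h2
  have h4 := h1.mul h3
  simp only [Function.comp_def] at h4
  rw [show (fun w : ℝ × ℝ × ℝ => a w.1 * b (w.2.1 + w.2.2)) =
      (fun w : ℝ × ℝ × ℝ => a w.1) * (fun x : ℝ × ℝ × ℝ => b (x.2.1 + x.2.2)) from rfl, h4.fderiv]
  simp
  ring

lemma contactCoef_eq (p q : ℝ) (v : ℝ × ℝ × ℝ) :
    contactCoef p q v =
      -((p + q) * (p * cos v.1 ^ 2 + q * sin v.1 ^ 2) * sin v.1 * cos v.1) := by
  have haF : HasDerivAt (fun s : ℝ => p * cos s ^ 2 + q * sin s ^ 2)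
      (2 * (q - p) * sin v.1 * cos v.1) v.1 := by
    have h := (((Real.hasDerivAt_cos v.1).pow 2).const_mul p).add
      (((Real.hasDerivAt_sin v.1).pow 2).const_mul q)
    refine h.congr_deriv ?_
    push_cast
    ring
  have haG : HasDerivAt (fun s : ℝ => sin s * cos s * q)
      ((cos v.1 * cos v.1 + sin v.1 * (-sin v.1)) * q) v.1 :=
    ((Real.hasDerivAt_sin v.1).mul (Real.hasDerivAt_cos v.1)).mul_const q
  have haH : HasDerivAt (fun s : ℝ => -(sin s * cos s * p))
      (-((cos v.1 * cos v.1 + sin v.1 * (-sin v.1)) * p)) v.1 :=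
    (((Real.hasDerivAt_sin v.1).mul (Real.hasDerivAt_cos v.1)).mul_const p).neg
  have dF : ∀ u, fderiv ℝ (Fc p q) v u =
      (2 * (q - p) * sin v.1 * cos v.1) * cos (v.2.1 + v.2.2) * u.1 +
        (p * cos v.1 ^ 2 + q * sin v.1 ^ 2) * (-sin (v.2.1 + v.2.2)) * (u.2.1 + u.2.2) :=
    fun u => fderiv_apply_aux _ cos v u haF (Real.hasDerivAt_cos _)
  have eG : Gc q = fun w : ℝ × ℝ × ℝ => (sin w.1 * cos w.1 * q) * sin (w.2.1 + w.2.2) := by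
    funext w; simp [Gc]; ring
  have eH : Hc p = fun w : ℝ × ℝ × ℝ => (-(sin w.1 * cos w.1 * p)) * sin (w.2.1 + w.2.2) := by
    funext w; simp [Hc]; ring
  have dG : ∀ u, fderiv ℝ (Gc q) v u =
      ((cos v.1 * cos v.1 + sin v.1 * (-sin v.1)) * q) * sin (v.2.1 + v.2.2) * u.1 +
        (sin v.1 * cos v.1 * q) * cos (v.2.1 + v.2.2) * (u.2.1 + u.2.2) := by
    intro u
    rw [eG]
    exact fderiv_apply_aux _ sin v u haG (Real.hasDerivAt_sin _)
  have dH : ∀ u, fderiv ℝ (Hc p) v u =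
      (-((cos v.1 * cos v.1 + sin v.1 * (-sin v.1)) * p)) * sin (v.2.1 + v.2.2) * u.1 +
        (-(sin v.1 * cos v.1 * p)) * cos (v.2.1 + v.2.2) * (u.2.1 + u.2.2) := by
    intro u
    rw [eH]
    exact fderiv_apply_aux _ sin v u haH (Real.hasDerivAt_sin _)
  simp only [contactCoef, dF, dG, dH, Fc, Gc, Hc, es, eφ1, eφ2]
  have h := sin_sq_add_cos_sq (v.2.1 + v.2.2)
  linear_combination (-((p + q) * (p * cos v.1 ^ 2 + q * sin v.1 ^ 2) * sin v.1 * cos v.1)) * h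

/-- `α_{p,q} ∧ dα_{p,q} = −(p+q)(p cos² s + q sin² s) sin s cos s · ds∧dφ1∧dφ2`,
and for `p, q > 0` the form `α_{p,q}` is contact on `0 < s < π/2`. -/
theorem stmt_13 (p q : ℝ) :
    (∀ v : ℝ × ℝ × ℝ,
      contactCoef p q v =
        -((p + q) * (p * cos v.1 ^ 2 + q * sin v.1 ^ 2) * sin v.1 * cos v.1)) ∧
    (0 < p → 0 < q → ∀ v : ℝ × ℝ × ℝ, 0 < v.1 → v.1 < π / 2 →
      contactCoef p q v ≠ 0) := by
  refine ⟨contactCoef_eq p q, ?_⟩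
  intro hp hq v hs1 hs2
  have hπ : (0:ℝ) < π := Real.pi_pos
  have hsin : 0 < sin v.1 := Real.sin_pos_of_pos_of_lt_pi hs1 (by linarith)
  have hcos : 0 < cos v.1 := Real.cos_pos_of_mem_Ioo ⟨by linarith, hs2⟩
  have h3 : 0 < p * cos v.1 ^ 2 + q * sin v.1 ^ 2 := by
    nlinarith [mul_pos hq (mul_pos hsin hsin), mul_nonneg hp.le (sq_nonneg (cos v.1))]
  have hpos : 0 < (p + q) * (p * cos v.1 ^ 2 + q * sin v.1 ^ 2) * sin v.1 * cos v.1 :=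
    mul_pos (mul_pos (mul_pos (by linarith) h3) hsin) hcos
  rw [contactCoef_eq]
  exact neg_ne_zero.mpr hpos.ne'
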